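/- arXiv:2311.12870 — 2 statements merged into one kernel-verified Lean document; each statement's English description precedes it below -/
import Mathlib

section
/- For every n ≥ 3 the sets F_{n−1} × ℝ³ and F_n are disjoint, i.e. F_{n−1} × ℝ³ ⊆ F_n^∁; consequently also 𝒮(F_{n−1} × ℝ³) ⊆ F_n^∁. -/
open MeasureTheory ENNReal

noncomputable section

/-- Momentum space `ℝ³`. -/
abbrev R3 : Type := EuclideanSpace ℝ (Fin 3)

/-- `pfun k = p_{n+1}(k₁,…,k_n) = e^{n+1} ∏_{i=1}^{n} (|k_i|² + 1)²` for `k : Fin n → ℝ³`. -/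
def pfun {n : ℕ} (k : Fin n → R3) : ℝ :=
  Real.exp (n + 1) * ∏ i, (‖k i‖ ^ 2 + 1) ^ 2

/-- `Eset n = E_{n+1} ⊆ (ℝ³)^{n+1}`:
`exp(p_{n+1}(k₁,…,k_n)/2) < |k_{n+1}| < exp(p_{n+1}(k₁,…,k_n))`. -/
def Eset (n : ℕ) : Set (Fin (n + 1) → R3) :=
  {k | Real.exp (pfun (fun i : Fin n => k i.castSucc) / 2) < ‖k (Fin.last n)‖ ∧
       ‖k (Fin.last n)‖ < Real.exp (pfun (fun i : Fin n => k i.castSucc))}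

/-- The symmetrizer `𝒮` on subsets of `(ℝ³)^n`: all tuples having a permutation in `X`. -/
def symmSet {n : ℕ} (X : Set (Fin n → R3)) : Set (Fin n → R3) :=
  {k | ∃ σ : Equiv.Perm (Fin n), (k ∘ σ) ∈ X}

/-- `extendSet X = X × ℝ³ ⊆ (ℝ³)^{n+1}` for `X ⊆ (ℝ³)^n`. -/
def extendSet {n : ℕ} (X : Set (Fin n → R3)) : Set (Fin (n + 1) → R3) :=
  {k | (fun i : Fin n => k i.castSucc) ∈ X}

/-- `Fset n = F_{n+1}`: `F₁ = ∅`, `F_{n} = 𝒮((F_{n−1}^∁ × ℝ³) ∩ E_n)`. -/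
def Fset : (n : ℕ) → Set (Fin (n + 1) → R3)
  | 0 => ∅
  | n + 1 => symmSet (extendSet (Fset n)ᶜ ∩ Eset (n + 1))

/-- A representative of a vector of the Fock space: component `n` is a function of
`(k₁,…,k_n; p)`, i.e. of `n + 1` points of `ℝ³`. -/
abbrev FockRep : Type := (n : ℕ) → (Fin (n + 1) → R3) → ℂ

/-- Remove the `i`-th entry of a tuple. -/
def removeAt {n : ℕ} (i : Fin (n + 1)) (f : Fin (n + 1) → R3) : Fin n → R3 :=
  fun j => f (i.succAbove j)

/-- `Â⁺_m` : `(Â⁺_m ψ)(k₁,…,k_{m+1};p) = (m+1)^{-1/2} ∑_i |k_i|^{-1/2} ψ(…,k̂_i,…; p + k_i)`. -/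
def Aplus (m : ℕ) (ψ : (Fin (m + 1) → R3) → ℂ) : (Fin (m + 2) → R3) → ℂ :=
  fun x =>
    (Real.sqrt (m + 1) : ℂ)⁻¹ *
      ∑ i : Fin (m + 1),
        (Real.sqrt ‖x i.castSucc‖ : ℂ)⁻¹ *
          ψ (Fin.snoc (removeAt i fun j : Fin (m + 1) => x j.castSucc)
              (x (Fin.last (m + 1)) + x i.castSucc))

/-- `Aminus t = Â⁻_{t+1}` : the full annihilation-type operator. -/
def Aminus (t : ℕ) (ψ : (Fin (t + 2) → R3) → ℂ) : (Fin (t + 1) → R3) → ℂ :=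
  fun x =>
    (Real.sqrt (t + 1) : ℂ)⁻¹ *
      ∑ i : Fin (t + 1),
        ∫ w : R3, (Real.sqrt ‖w‖ : ℂ)⁻¹ *
          ψ (Fin.snoc (Fin.insertNth i w fun j : Fin t => x j.castSucc)
              (x (Fin.last t) - w))

/-- `AminusL t l = Â⁻_{t+1, l}` : the single term of `Â⁻_{t+1}` where the integration
variable is inserted at position `l`. -/
def AminusL (t : ℕ) (l : Fin (t + 1)) (ψ : (Fin (t + 2) → R3) → ℂ) :
    (Fin (t + 1) → R3) → ℂ :=
  fun x =>
    (Real.sqrt (t + 1) : ℂ)⁻¹ *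
      ∫ w : R3, (Real.sqrt ‖w‖ : ℂ)⁻¹ *
        ψ (Fin.snoc (Fin.insertNth l w fun j : Fin t => x j.castSucc)
            (x (Fin.last t) - w))

/-- `Â⁻_m χ_m`, with `Â⁻₀ := 0`. -/
def AminusComp : (m : ℕ) → ((Fin (m + 1) → R3) → ℂ) → (Fin m → R3) → ℂ
  | 0, _ => 0
  | t + 1, ψ => Aminus t ψ

/-- The full (formal) operator `Â` : `(Âψ)_n = Â⁺_{n−1}ψ_{n−1} + Â⁻_{n+1}ψ_{n+1}`,
with `Â⁺_{−1} := 0`. -/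
def Aop (ψ : FockRep) : FockRep := fun n =>
  match n with
  | 0 => Aminus 0 (ψ 1)
  | n + 1 => fun x => Aplus n (ψ n) x + Aminus (n + 1) (ψ (n + 2)) x

/-- `Tset n` is the set whose indicator gives `1_T` on component `n`:
`∅` for `n = 0` and `F_n × ℝ³` for `n ≥ 1`. -/
def Tset : (n : ℕ) → Set (Fin (n + 1) → R3)
  | 0 => ∅
  | n + 1 => extendSet (Fset n)

/-- The operator `1_T`. -/
def oneT (ψ : FockRep) : FockRep := fun n => (Tset n).indicator (ψ n)

/-- The operator `1_{T^∁}`. -/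
def oneTc (ψ : FockRep) : FockRep := fun n => ((Tset n)ᶜ).indicator (ψ n)

/-- The operator `Â⁺`: `(Â⁺ψ)_n = Â⁺_{n−1}ψ_{n−1}`, `(Â⁺ψ)₀ = 0`. -/
def AplusOp (ψ : FockRep) : FockRep := fun n =>
  match n with
  | 0 => 0
  | n + 1 => Aplus n (ψ n)

/-- `‖ψ‖² = ∑_n ‖ψ_n‖²_{L²}` (in `ℝ≥0∞`). -/
def HnormSq (ψ : FockRep) : ℝ≥0∞ := ∑' n, eLpNorm (ψ n) 2 volume ^ 2

/-- Membership in the Hilbert space `H`. -/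
def memH (ψ : FockRep) : Prop := (∀ n, MemLp (ψ n) 2 volume) ∧ HnormSq ψ < ⊤

/-- `‖1_T Â⁺ 1_{T^∁} ψ‖²`. -/
def VnormSq (ψ : FockRep) : ℝ≥0∞ := HnormSq (oneT (AplusOp (oneTc ψ)))

/-- `ψ ∈ U`, i.e. `ψ ∈ H` and `Âψ ∈ H`. -/
def memU (ψ : FockRep) : Prop := memH ψ ∧ memH (Aop ψ)

/-- `ψ ∈ V`, i.e. `ψ ∈ H` and `‖1_T Â⁺ 1_{T^∁} ψ‖ < ∞`. -/
def memV (ψ : FockRep) : Prop := memH ψ ∧ VnormSq ψ < ⊤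

/-- The inner product of `H` (conjugate-linear in the first argument). -/
def Hinner (φ ψ : FockRep) : ℂ := ∑' n, ∫ x, (starRingEnd ℂ) (φ n x) * ψ n x

/-- `‖φ − ψ‖²`. -/
def distSq (φ ψ : FockRep) : ℝ≥0∞ :=
  ∑' n, eLpNorm (fun x => φ n x - ψ n x) 2 volume ^ 2

/-- `χ_{n,j}` for `n = t + 2`: the `j`-th term of the recursion formula defining members
of `W` in terms of `prev = χ_{n−2}`, with vanishing-set `Dset = D_{n−1}`. -/
def chiTerm (t : ℕ) (Dset : Set (Fin (t + 1) → R3)) (prev : (Fin (t + 1) → R3) → ℂ)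
    (j : Fin (t + 1)) : (Fin (t + 3) → R3) → ℂ :=
  fun x =>
    let kk : Fin (t + 2) → R3 := fun i => x i.castSucc
    let p : R3 := x (Fin.last (t + 2))
    let kf : Fin (t + 1) → R3 := fun i => kk i.castSucc
    let kn : R3 := kk (Fin.last (t + 1))
    (((-Real.sqrt (t + 2) * (Eset (t + 1)).indicator (fun _ => (1 : ℝ)) kk *
          Dsetᶜ.indicator (fun _ => (1 : ℝ)) kf) /
        (2 * Real.pi * Real.sqrt (t + 1) * pfun kf * Real.sqrt (‖kn‖ ^ 5)) : ℝ) : ℂ) *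
      ((Real.sqrt ‖kf j‖ : ℂ)⁻¹ * prev (Fin.snoc (removeAt j kf) (p + kf j + kn)))

/-- The full recursion formula `χ_n = ∑_{j=1}^{n−1} χ_{n,j}` for `n = t + 2`. -/
def chiFormula (t : ℕ) (Dset : Set (Fin (t + 1) → R3)) (prev : (Fin (t + 1) → R3) → ℂ) :
    (Fin (t + 3) → R3) → ℂ :=
  fun x => ∑ j : Fin (t + 1), chiTerm t Dset prev j x

/-- `χ ∈ W`, with lowest index `m` and admissible set `D = D_{m+1}`. -/
def IsW (m : ℕ) (D : Set (Fin (m + 1) → R3)) (χ : FockRep) : Prop :=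
  memH χ ∧
  Fset m ⊆ D ∧ symmSet D = D ∧
  (∀ n, (¬ ∃ j : ℕ, n = m + 2 * j) → χ n = 0) ∧
  χ (m + 2) = chiFormula m D (χ m) ∧
  (∀ j : ℕ, χ (m + 2 * j + 4) = chiFormula (m + 2 * j + 2) ∅ (χ (m + 2 * j + 2))) ∧
  MemLp (AminusComp m (χ m)) 2 volume ∧
  MemLp ((extendSet D).indicator (Aplus m (χ m))) 2 volume

/-- Membership in the linear span of `W`. -/
def inSpanW (φ : FockRep) : Prop :=
  ∃ (k : ℕ) (c : Fin k → ℂ) (χs : Fin k → FockRep),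
    (∀ i, ∃ (m : ℕ) (D : Set (Fin (m + 1) → R3)), IsW m D (χs i)) ∧
    ∀ n x, φ n x = ∑ i, c i * χs i n x

/-- The shell `B_R ∖ B_{1/R} ⊆ ℝ³`. -/
def shellSet (R : ℝ) : Set R3 := {k | R⁻¹ ≤ ‖k‖ ∧ ‖k‖ < R}

/-- `(B_R ∖ B_{1/R})^n × ℝ³` as a subset of `(ℝ³)^{n+1}`. -/
def cutSet (R : ℝ) (n : ℕ) : Set (Fin (n + 1) → R3) :=
  {x | ∀ i : Fin n, x i.castSucc ∈ shellSet R}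

/-- The cut-off creation operator `Â^{R+}_m`. -/
def ARplus (R : ℝ) (m : ℕ) (ψ : (Fin (m + 1) → R3) → ℂ) : (Fin (m + 2) → R3) → ℂ :=
  (cutSet R (m + 1)).indicator (Aplus m ψ)

/-- The cut-off annihilation operator `Â^{R−}_{t+1}`. -/
def ARminus (R : ℝ) (t : ℕ) (ψ : (Fin (t + 2) → R3) → ℂ) : (Fin (t + 1) → R3) → ℂ :=
  (cutSet R t).indicator (Aminus t ((cutSet R (t + 1)).indicator ψ))

/-- `p'_{N+1}(i₁,…,i_N) = e^{N+1} ∏_l (i_l² + 1)²`. -/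
def pIdx (N : ℕ) (i : Fin N → ℕ) : ℝ :=
  Real.exp (N + 1) * ∏ l, ((i l : ℝ) ^ 2 + 1) ^ 2

/-- `X_{N,i} × ℝ³`: the product of spherical shells `i_l ≤ |k_l| < i_l + 1`
in the `k`-variables, with `p` free. -/
def Xshell (N : ℕ) (i : Fin N → ℕ) : Set (Fin (N + 1) → R3) :=
  {x | ∀ l : Fin N, (i l : ℝ) ≤ ‖x l.castSucc‖ ∧ ‖x l.castSucc‖ < (i l : ℝ) + 1}

/-!
On `E_n` the last coordinate dominates all others: `p_n ≥ 2 (|k_i|² + 1)²` for every other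
coordinate, so `|k_n| > exp (p_n / 2) > |k_i|`. A point of `F_{n-1} × ℝ³ ∩ F_n` thus has a
dominating coordinate picked by its `F_n`-witness and one picked among its first `n - 1`
coordinates by its `F_{n-1}`-witness. If the first is the free last coordinate, the other
coordinates are a permutation of a point of `F_{n-1}`, against the complement condition in `F_n`.
If the two coordinates differ, each dominates the other. If they coincide, the coordinate lies
below `exp p_{n-1}` and above `exp (p_n / 2)`, but `p_n ≥ e p_{n-1}`.
-/

section Fset

variable {n : ℕ}

lemma comp_perm_mem_symmSet {X : Set (Fin n → R3)} {k : Fin n → R3} (hk : k ∈ symmSet X)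
    (σ : Equiv.Perm (Fin n)) : k ∘ σ ∈ symmSet X := by
  obtain ⟨ρ, hρ⟩ := hk
  refine ⟨ρ.trans σ.symm, ?_⟩
  simpa [Function.comp_def] using hρ

lemma comp_perm_mem_Fset {k : Fin (n + 1) → R3} (hk : k ∈ Fset n) (σ : Equiv.Perm (Fin (n + 1))) :
    k ∘ σ ∈ Fset n := by
  cases n with
  | zero => exact hk.elim
  | succ m => exact comp_perm_mem_symmSet hk σ

lemma exists_perm_init_comp_eq {α : Type*} (k : Fin (n + 1) → α) (σ : Equiv.Perm (Fin (n + 1)))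
    (hσ : σ (Fin.last n) = Fin.last n) :
    ∃ σ' : Equiv.Perm (Fin n), Fin.init (k ∘ σ) = Fin.init k ∘ σ' := by
  have hne : ∀ i : Fin n, σ i.castSucc ≠ Fin.last n := fun i h =>
    (Fin.castSucc_lt_last i).ne (σ.injective (h.trans hσ.symm))
  have hinj : Function.Injective fun i => (σ i.castSucc).castPred (hne i) := fun a b h =>
    Fin.castSucc_injective _ (σ.injective (by simpa using congrArg Fin.castSucc h))
  refine ⟨Equiv.ofBijective _ (Finite.injective_iff_bijective.mp hinj), funext fun i => ?_⟩
  simp [Fin.init]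

lemma init_comp_perm_mem_Fset {k : Fin (n + 2) → R3} (hk : Fin.init k ∈ Fset n)
    (σ : Equiv.Perm (Fin (n + 2))) (hσ : σ (Fin.last (n + 1)) = Fin.last (n + 1)) :
    Fin.init (k ∘ σ) ∈ Fset n := by
  obtain ⟨σ', hσ'⟩ := exists_perm_init_comp_eq k σ hσ
  exact hσ' ▸ comp_perm_mem_Fset hk σ'

end Fset

section Eset

variable {n : ℕ}

lemma one_le_sq_norm_add_one_sq (v : R3) : 1 ≤ (‖v‖ ^ 2 + 1) ^ 2 := by
  nlinarith [sq_nonneg ‖v‖]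

lemma two_mul_le_pfun (k : Fin n → R3) (i : Fin n) : 2 * (‖k i‖ ^ 2 + 1) ^ 2 ≤ pfun k := by
  have hfactor : (‖k i‖ ^ 2 + 1) ^ 2 ≤ ∏ l, (‖k l‖ ^ 2 + 1) ^ 2 := by
    simpa using Finset.prod_le_prod_of_subset_of_one_le (Finset.subset_univ {i})
      (fun l _ => by positivity) (fun l _ _ => one_le_sq_norm_add_one_sq (k l))
  have hexp : 2 ≤ Real.exp (n + 1) := by
    linarith [Real.add_one_le_exp ((n : ℝ) + 1), (n.cast_nonneg : (0 : ℝ) ≤ n)]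
  unfold pfun
  nlinarith [one_le_sq_norm_add_one_sq (k i)]

lemma lt_of_two_mul_le_of_exp_half_lt {s p a : ℝ} (hp : 2 * (s ^ 2 + 1) ^ 2 ≤ p)
    (ha : Real.exp (p / 2) < a) : s < a :=
  calc s < (s ^ 2 + 1) ^ 2 + 1 := by nlinarith [sq_nonneg s, sq_nonneg (s - 1)]
    _ ≤ Real.exp ((s ^ 2 + 1) ^ 2) := Real.add_one_le_exp _
    _ ≤ Real.exp (p / 2) := Real.exp_le_exp.2 (by linarith)
    _ < a := ha

lemma norm_lt_norm_last_of_mem_Eset {k : Fin (n + 1) → R3} (hk : k ∈ Eset n) (i : Fin n) :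
    ‖k i.castSucc‖ < ‖k (Fin.last n)‖ :=
  lt_of_two_mul_le_of_exp_half_lt (two_mul_le_pfun (Fin.init k) i) hk.1

lemma norm_lt_of_comp_perm_mem_Eset {k : Fin (n + 1) → R3} {σ : Equiv.Perm (Fin (n + 1))}
    (hk : k ∘ σ ∈ Eset n) {i : Fin (n + 1)} (hi : i ≠ σ (Fin.last n)) :
    ‖k i‖ < ‖k (σ (Fin.last n))‖ := by
  have hi' : σ.symm i ≠ Fin.last n := fun h => hi (by rw [← h, Equiv.apply_symm_apply])
  simpa using norm_lt_norm_last_of_mem_Eset hk ((σ.symm i).castPred hi')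

lemma pfun_init_comp_perm_mul (k : Fin (n + 1) → R3) (σ : Equiv.Perm (Fin (n + 1))) :
    pfun (Fin.init (k ∘ σ)) * (‖k (σ (Fin.last n))‖ ^ 2 + 1) ^ 2 =
      Real.exp (n + 1) * ∏ i, (‖k i‖ ^ 2 + 1) ^ 2 := by
  rw [pfun, mul_assoc, ← Equiv.prod_comp σ, Fin.prod_univ_castSucc]
  rfl

lemma two_mul_pfun_init_comp_init_le (x : Fin (n + 2) → R3) (σ : Equiv.Perm (Fin (n + 2)))
    (τ : Equiv.Perm (Fin (n + 1))) (h : σ (Fin.last (n + 1)) = (τ (Fin.last n)).castSucc) :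
    2 * pfun (Fin.init (Fin.init x ∘ τ)) ≤ pfun (Fin.init (x ∘ σ)) := by
  have hp := pfun_init_comp_perm_mul x σ
  have hq := pfun_init_comp_perm_mul (Fin.init x) τ
  rw [Fin.prod_univ_castSucc, h] at hp
  simp only [Fin.init] at hq
  set P := ∏ i : Fin (n + 1), (‖x i.castSucc‖ ^ 2 + 1) ^ 2
  have hexp : Real.exp ((n + 1 : ℕ) + 1) = Real.exp 1 * Real.exp ((n : ℕ) + 1) := by
    rw [← Real.exp_add]; push_cast; ring_nf
  have h_two_le : 2 ≤ Real.exp 1 * (‖x (Fin.last (n + 1))‖ ^ 2 + 1) ^ 2 := by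
    nlinarith [Real.add_one_le_exp (1 : ℝ), one_le_sq_norm_add_one_sq (x (Fin.last (n + 1)))]
  refine le_of_mul_le_mul_right ?_ (by positivity : 0 < (‖x (τ (Fin.last n)).castSucc‖ ^ 2 + 1) ^ 2)
  calc 2 * pfun (Fin.init (Fin.init x ∘ τ)) * (‖x (τ (Fin.last n)).castSucc‖ ^ 2 + 1) ^ 2
      = 2 * (Real.exp ((n : ℕ) + 1) * P) := by rw [mul_assoc, hq]
    _ ≤ Real.exp 1 * (‖x (Fin.last (n + 1))‖ ^ 2 + 1) ^ 2 * (Real.exp ((n : ℕ) + 1) * P) := by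
      gcongr
    _ = _ := by rw [hp, hexp]; ring

end Eset

theorem extendSet_Fset_subset_compl_Fset_succ : ∀ n, extendSet (Fset n) ⊆ (Fset (n + 1))ᶜ
  | 0 => fun _ hx => hx.elim
  | t + 1 => by
    rintro x hx ⟨σ, hσF, hσE⟩
    by_cases hσ : σ (Fin.last (t + 2)) = Fin.last (t + 2)
    · exact hσF (init_comp_perm_mem_Fset hx σ hσ)
    obtain ⟨τ, -, hτE⟩ := hx
    obtain ⟨j, hj⟩ : ∃ j, σ (Fin.last (t + 2)) = Fin.castSucc j :=
      ⟨_, (Fin.castSucc_castPred _ hσ).symm⟩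
    by_cases hjτ : j = τ (Fin.last (t + 1))
    · have hpq := two_mul_pfun_init_comp_init_le x σ τ (hjτ ▸ hj)
      have hlower : Real.exp (pfun (Fin.init (x ∘ σ)) / 2) < ‖x (σ (Fin.last (t + 2)))‖ := hσE.1
      have hupper : ‖x (τ (Fin.last (t + 1))).castSucc‖ <
          Real.exp (pfun (Fin.init (Fin.init x ∘ τ))) := hτE.2
      rw [hj, hjτ] at hlower
      exact (hlower.trans hupper).not_ge (Real.exp_le_exp.2 (by linarith))
    · have hσ_dom := norm_lt_of_comp_perm_mem_Eset hσE (i := (τ (Fin.last (t + 1))).castSucc)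
        (by rw [hj]; exact fun h => hjτ (Fin.castSucc_injective _ h).symm)
      have hτ_dom := norm_lt_of_comp_perm_mem_Eset hτE hjτ
      rw [hj] at hσ_dom
      exact hσ_dom.not_gt hτ_dom

/-- For every `n ≥ 3` (here `n = t + 3`), the sets `F_{n−1} × ℝ³` and
`F_n` are disjoint, i.e. `F_{n−1} × ℝ³ ⊆ F_n^∁`; consequently also
`𝒮(F_{n−1} × ℝ³) ⊆ F_n^∁`. -/
theorem statement3 (t : ℕ) :
    extendSet (Fset (t + 1)) ⊆ (Fset (t + 2))ᶜ ∧
    symmSet (extendSet (Fset (t + 1))) ⊆ (Fset (t + 2))ᶜ := by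
  refine ⟨extendSet_Fset_subset_compl_Fset_succ (t + 1), ?_⟩
  rintro x ⟨σ, hσ⟩ hx
  exact extendSet_Fset_subset_compl_Fset_succ (t + 1) hσ (comp_perm_mem_Fset hx σ)

end
end

section
/- For every χ ∈ W with lowest index m and admissible set D_{m+1}: ‖1_T Â⁺ 1_{T^∁} χ‖ ≤ ‖1_{D_{m+1}×ℝ³} Â⁺_m χ_m‖_{L²} < ∞. In particular W ⊆ V. -/
open MeasureTheory ENNReal

noncomputable section

/-!
Only the component `m + 1` of `1_T Â⁺ 1_{T^∁} χ` survives. The key fact is that deleting any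
coordinate of a tuple in `F_{s+1}` gives a tuple outside `F_s`. With it, induction along the
recursion shows that each `χ_{m+2j+2}` vanishes on `F_{m+2j+1} × ℝ³ × ℝ³` (at `j = 0` because
`F_{m+1} ⊆ D`), hence, by the factor `1_{E}`, is supported in `F_{m+2j+2} × ℝ³`; so
`1_{T^∁} χ` has no component but the `m`-th. On `F_{m+1} × ℝ³` the same fact shows that
`1_{T^∁}` does not change `Â⁺_m χ_m`, and `F_{m+1} ⊆ D` gives the bound.
-/

lemma pfun_comp_perm {n : ℕ} (a : Fin n → R3) (τ : Equiv.Perm (Fin n)) :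
    pfun (a ∘ τ) = pfun a := by
  unfold pfun
  rw [Function.comp_def, Equiv.prod_comp τ (fun i => (‖a i‖ ^ 2 + 1) ^ 2)]

lemma pfun_pos {n : ℕ} (a : Fin n → R3) : 0 < pfun a := by
  unfold pfun; positivity

lemma two_mul_norm_sq_add_one_sq_le_pfun {n : ℕ} (a : Fin n → R3) (j : Fin n) :
    2 * (‖a j‖ ^ 2 + 1) ^ 2 ≤ pfun a := by
  have hfactor : (‖a j‖ ^ 2 + 1) ^ 2 ≤ ∏ i, (‖a i‖ ^ 2 + 1) ^ 2 := by
    simpa using Finset.prod_mono_set_of_one_le (f := fun i => (‖a i‖ ^ 2 + 1) ^ 2)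
      (fun i => one_le_pow₀ (by nlinarith [sq_nonneg ‖a i‖])) (Finset.subset_univ {j})
  have hexp : (2 : ℝ) ≤ Real.exp (n + 1) := by
    linarith [Real.add_one_le_exp (n + 1 : ℝ), (Nat.cast_nonneg n : (0 : ℝ) ≤ n)]
  unfold pfun
  nlinarith [sq_nonneg (‖a j‖ ^ 2 + 1)]

lemma two_mul_pfun_removeAt_le {n : ℕ} (a : Fin (n + 1) → R3) (j : Fin (n + 1)) :
    2 * pfun (removeAt j a) ≤ pfun a := by
  have hexp : Real.exp (↑(n + 1) + 1) = Real.exp 1 * Real.exp (n + 1) := by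
    rw [← Real.exp_add]; push_cast; ring_nf
  have hfactor : 1 ≤ (‖a j‖ ^ 2 + 1) ^ 2 := one_le_pow₀ (by nlinarith [sq_nonneg ‖a j‖])
  have htwo : (2 : ℝ) ≤ Real.exp 1 := by linarith [Real.add_one_le_exp (1 : ℝ)]
  have hpos := pfun_pos (removeAt j a)
  calc 2 * pfun (removeAt j a) ≤ Real.exp 1 * (‖a j‖ ^ 2 + 1) ^ 2 * pfun (removeAt j a) := by
        gcongr; nlinarith
    _ = pfun a := by
        rw [pfun, pfun, Fin.prod_univ_succAbove _ j, hexp]; simp only [removeAt]; ring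

lemma norm_lt_of_exp_half_pfun_lt {n : ℕ} (a : Fin n → R3) (j : Fin n) {y : ℝ}
    (hy : Real.exp (pfun a / 2) < y) : ‖a j‖ < y := by
  have hP := two_mul_norm_sq_add_one_sq_le_pfun a j
  have hexp := Real.add_one_le_exp (pfun a / 2)
  nlinarith [sq_nonneg (‖a j‖ - 1), sq_nonneg ‖a j‖]

lemma exists_perm_comp_eq_of_range_eq {ι α : Type*} {f g : ι → α}
    (hf : Function.Injective f) (hg : Function.Injective g) (h : Set.range f = Set.range g) :
    ∃ τ : Equiv.Perm ι, f = g ∘ τ :=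
  ⟨(Equiv.ofInjective f hf).trans ((Equiv.setCongr h).trans (Equiv.ofInjective g hg).symm),
    funext fun i => by simp [Equiv.apply_ofInjective_symm]⟩

lemma range_comp_castSucc_eq {n : ℕ} (σ : Equiv.Perm (Fin (n + 1))) :
    Set.range (σ ∘ Fin.castSucc) = {σ (Fin.last n)}ᶜ := by
  rw [Set.range_comp, ← Fin.succAbove_last, Fin.range_succAbove,
    Set.image_compl_eq σ.bijective, Set.image_singleton]

lemma comp_perm_mem_symmSet_iff {n : ℕ} {X : Set (Fin n → R3)} {k : Fin n → R3}
    (τ : Equiv.Perm (Fin n)) : k ∘ τ ∈ symmSet X ↔ k ∈ symmSet X :=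
  ⟨fun ⟨σ, hσ⟩ => ⟨σ.trans τ, hσ⟩,
    fun ⟨σ, hσ⟩ => ⟨σ.trans τ.symm, by simpa [Function.comp_def] using hσ⟩⟩

lemma subset_symmSet {n : ℕ} (X : Set (Fin n → R3)) : X ⊆ symmSet X :=
  fun _ hk => ⟨1, hk⟩

lemma comp_perm_mem_Fset_iff {t : ℕ} (k : Fin (t + 1) → R3) (τ : Equiv.Perm (Fin (t + 1))) :
    k ∘ τ ∈ Fset t ↔ k ∈ Fset t := by
  cases t with
  | zero => simp [Fset]
  | succ t => exact comp_perm_mem_symmSet_iff τ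

lemma exists_of_mem_Fset_succ {s : ℕ} {k : Fin (s + 2) → R3} (hk : k ∈ Fset (s + 1)) :
    ∃ h, removeAt h k ∉ Fset s ∧ Real.exp (pfun (removeAt h k) / 2) < ‖k h‖ ∧
      ‖k h‖ < Real.exp (pfun (removeAt h k)) := by
  obtain ⟨σ, hσF, hσlow, hσup⟩ := hk
  obtain ⟨τ, hτ⟩ := exists_perm_comp_eq_of_range_eq
    (σ.injective.comp (Fin.castSucc_injective _)) Fin.succAbove_right_injective
    ((range_comp_castSucc_eq σ).trans (Fin.range_succAbove _).symm)
  have hfront : (fun i : Fin (s + 1) => (k ∘ σ) i.castSucc) = removeAt (σ (Fin.last _)) k ∘ τ :=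
    congrArg (k ∘ ·) hτ
  refine ⟨σ (Fin.last _), fun hF => hσF ?_, ?_⟩
  · exact hfront ▸ (comp_perm_mem_Fset_iff _ τ).2 hF
  · rw [hfront, pfun_comp_perm] at hσlow hσup
    exact ⟨hσlow, hσup⟩

/-- `k` has a coordinate `k h` in the `E`-range of `p(removeAt h k)`; if `removeAt i k ∈ Fset s`,
this tuple has such a coordinate `k l` too. If `l = h`, then `p` of `k` without `i, h` is at most
half of `p(removeAt h k)`, which is too small for `‖k h‖`; otherwise each of `‖k h‖`, `‖k l‖`
exceeds the other. -/
theorem removeAt_notMem_Fset {s : ℕ} {k : Fin (s + 2) → R3} (hk : k ∈ Fset (s + 1))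
    (i : Fin (s + 2)) : removeAt i k ∉ Fset s := by
  obtain ⟨h, hhF, hhlow, hhup⟩ := exists_of_mem_Fset_succ hk
  rcases eq_or_ne i h with rfl | hih
  · exact hhF
  intro hmem
  cases s with
  | zero => exact hmem
  | succ s =>
    obtain ⟨h', -, hh'low, hh'up⟩ := exists_of_mem_Fset_succ hmem
    obtain ⟨w, hw⟩ := Fin.exists_succAbove_eq hih.symm
    rcases eq_or_ne w h' with rfl | hwh'
    · have hhalf : 2 * pfun (removeAt w (removeAt i k)) ≤ pfun (removeAt h k) := by
        have hswap := Fin.removeNth_removeNth_eq_swap k w i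
        rw [hw] at hswap
        change 2 * pfun (Fin.removeNth w (Fin.removeNth i k)) ≤ _
        rw [hswap]
        exact two_mul_pfun_removeAt_le _ _
      have hlt : ‖k h‖ < Real.exp (pfun (removeAt w (removeAt i k))) := by
        rw [← hw]; exact hh'up
      have hpos := pfun_pos (removeAt w (removeAt i k))
      have hexp := Real.exp_le_exp.2 (show pfun (removeAt w (removeAt i k)) ≤
        pfun (removeAt h k) / 2 by linarith)
      linarith
    · obtain ⟨j, hj⟩ := Fin.exists_succAbove_eq hwh'
      have hhl : ‖k h‖ < ‖k (i.succAbove h')‖ := by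
        have := norm_lt_of_exp_half_pfun_lt (removeAt h' (removeAt i k)) j hh'low
        rwa [show removeAt h' (removeAt i k) j = k h by simp only [removeAt, hj, hw]] at this
      obtain ⟨j', hj'⟩ := Fin.exists_succAbove_eq (show i.succAbove h' ≠ h by
        rw [← hw]; exact fun e => hwh' (Fin.succAbove_right_injective e).symm)
      have hlh : ‖k (i.succAbove h')‖ < ‖k h‖ := by
        have := norm_lt_of_exp_half_pfun_lt (removeAt h k) j' hhlow
        rwa [show removeAt h k j' = k (i.succAbove h') by simp only [removeAt, hj']] at this
      linarith

lemma chiFormula_eq_zero_of_notMem_Eset {t : ℕ} {Dset : Set (Fin (t + 1) → R3)}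
    {prev : (Fin (t + 1) → R3) → ℂ} {x : Fin (t + 3) → R3}
    (hx : (fun i : Fin (t + 2) => x i.castSucc) ∉ Eset (t + 1)) :
    chiFormula t Dset prev x = 0 :=
  Finset.sum_eq_zero fun j _ => by simp [chiTerm, Set.indicator_of_notMem hx]

lemma chiFormula_eqOn_zero_of_subset {t : ℕ} {X Dset : Set (Fin (t + 1) → R3)} (hX : X ⊆ Dset)
    (prev : (Fin (t + 1) → R3) → ℂ) :
    Set.EqOn (chiFormula t Dset prev) 0 (extendSet (extendSet X)) := fun x hx =>
  Finset.sum_eq_zero fun j _ => by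
    simp [chiTerm, Set.indicator_of_notMem (Set.notMem_compl_iff.2 (hX hx))]

lemma chiFormula_eqOn_zero_Fset {s : ℕ} (Dset : Set (Fin (s + 2) → R3))
    {prev : (Fin (s + 2) → R3) → ℂ} (hprev : Function.support prev ⊆ Tset (s + 1)) :
    Set.EqOn (chiFormula (s + 1) Dset prev) 0 (extendSet (extendSet (Fset (s + 1)))) :=
  fun x hx => Finset.sum_eq_zero fun j _ => by
    have hprev_zero : prev (Fin.snoc (removeAt j fun i => x i.castSucc.castSucc)
        (x (Fin.last _) + x j.castSucc.castSucc + x (Fin.last _).castSucc)) = 0 :=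
      Function.notMem_support.1 fun hmem =>
        removeAt_notMem_Fset hx j (by simpa [Tset, extendSet] using hprev hmem)
    simp [chiTerm, hprev_zero]

lemma support_chiFormula_subset_Tset {t : ℕ} {Dset : Set (Fin (t + 1) → R3)}
    {prev : (Fin (t + 1) → R3) → ℂ}
    (hF : Set.EqOn (chiFormula t Dset prev) 0 (extendSet (extendSet (Fset t)))) :
    Function.support (chiFormula t Dset prev) ⊆ Tset (t + 2) := by
  intro x hx
  by_cases hxF : x ∈ extendSet (extendSet (Fset t))
  · exact absurd (hF hxF) hx
  · by_contra hT
    exact hx (chiFormula_eq_zero_of_notMem_Eset fun hE => hT (subset_symmSet _ ⟨hxF, hE⟩))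

lemma Aplus_indicator_compl_Tset {n : ℕ} (ψ : (Fin (n + 1) → R3) → ℂ) {x : Fin (n + 2) → R3}
    (hx : x ∈ Tset (n + 1)) : Aplus n ((Tset n)ᶜ.indicator ψ) x = Aplus n ψ x := by
  simp only [Aplus]
  congr 1
  refine Finset.sum_congr rfl fun i _ => congrArg _ (Set.indicator_of_mem ?_ _)
  cases n with
  | zero => simp [Tset]
  | succ n => simpa [Tset, extendSet] using removeAt_notMem_Fset hx i

namespace IsW

variable {m : ℕ} {D : Set (Fin (m + 1) → R3)} {χ : FockRep}

lemma support_subset_Tset (h : IsW m D χ) (j : ℕ) :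
    Function.support (χ (m + 2 * j + 2)) ⊆ Tset (m + 2 * j + 2) := by
  obtain ⟨-, hFD, -, -, hbase, hstep, -, -⟩ := h
  induction j with
  | zero => exact hbase ▸ support_chiFormula_subset_Tset (chiFormula_eqOn_zero_of_subset hFD _)
  | succ j ih =>
    rw [show m + 2 * (j + 1) + 2 = m + 2 * j + 4 by ring, hstep j]
    exact support_chiFormula_subset_Tset (chiFormula_eqOn_zero_Fset _ ih)

lemma oneTc_eq_zero (h : IsW m D χ) {n : ℕ} (hn : n ≠ m) : oneTc χ n = 0 := by
  by_cases hW : ∃ j, n = m + 2 * j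
  · obtain ⟨_ | j, rfl⟩ := hW
    · exact absurd rfl hn
    · rw [show m + 2 * (j + 1) = m + 2 * j + 2 by ring, oneTc, Set.indicator_compl, Set.indicator_eq_self.2 (h.support_subset_Tset j),
        sub_self]
  · obtain ⟨-, -, -, hzero, -⟩ := h
    simp [oneTc, hzero n hW]

lemma oneT_AplusOp_oneTc_eq_zero (h : IsW m D χ) {n : ℕ} (hn : n ≠ m + 1) :
    oneT (AplusOp (oneTc χ)) n = 0 := by
  cases n with
  | zero => funext x; simp [oneT, Tset]
  | succ n => funext x; simp [oneT, AplusOp, h.oneTc_eq_zero (n := n) (by omega), Aplus]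

end IsW

lemma norm_oneT_AplusOp_oneTc_succ_le {m : ℕ} {D : Set (Fin (m + 1) → R3)} (hFD : Fset m ⊆ D)
    (χ : FockRep) (x : Fin (m + 2) → R3) :
    ‖oneT (AplusOp (oneTc χ)) (m + 1) x‖ ≤ ‖(extendSet D).indicator (Aplus m (χ m)) x‖ := by
  by_cases hx : x ∈ Tset (m + 1)
  · simp only [oneT, AplusOp, oneTc, Set.indicator_of_mem hx, Aplus_indicator_compl_Tset _ hx,
      Set.indicator_of_mem (show x ∈ extendSet D from hFD hx), le_refl]
  · simp [oneT, Set.indicator_of_notMem hx]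

/-- For every `χ ∈ W` with lowest index `m` and admissible set `D`:
`‖1_T Â⁺ 1_{T^∁} χ‖ ≤ ‖1_{D×ℝ³} Â⁺_m χ_m‖_{L²} < ∞` (stated for the squared norms).
In particular `W ⊆ V`. -/
theorem statement5 (m : ℕ) (D : Set (Fin (m + 1) → R3)) (χ : FockRep)
    (h : IsW m D χ) :
    VnormSq χ ≤ eLpNorm ((extendSet D).indicator (Aplus m (χ m))) 2 volume ^ 2 ∧
    eLpNorm ((extendSet D).indicator (Aplus m (χ m))) 2 volume ^ 2 < ⊤ ∧
    memV χ := by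
  have ⟨hH, hFD, _, _, _, _, _, hAp⟩ := h
  have hV : VnormSq χ ≤ eLpNorm ((extendSet D).indicator (Aplus m (χ m))) 2 volume ^ 2 := by
    rw [VnormSq, HnormSq, tsum_eq_single (m + 1) fun n hn => by
      simp [h.oneT_AplusOp_oneTc_eq_zero hn]]
    gcongr
    exact eLpNorm_mono (norm_oneT_AplusOp_oneTc_succ_le hFD χ)
  have hfin := ENNReal.pow_lt_top hAp.eLpNorm_lt_top (n := 2)
  exact ⟨hV, hfin, hH, hV.trans_lt hfin⟩

end
end
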